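/- Let s ≥ 1 be an integer, let P_1,…,P_s ∈ ℂ[x] be polynomials with exactly k_1,…,k_s ≥ 2 nonzero coefficients respectively, and suppose C_1,…,C_s > 0 are constants with μ_1(S(P_i,t)) ≤ C_i · t^{1/(k_i−1)} for all t > 0 and all i. Then for all 0 < y_1,…,y_s ≤ 1: 0 ≤ (−1)^s ∫_{S(P_1,y_1) ∩ ⋯ ∩ S(P_s,y_s)} log|P_1(x)| ⋯ log|P_s(x)| dx/x ≤ ( C_1 · I_{s,k_1}(y_1) ⋯ C_s · I_{s,k_s}(y_s) )^{1/s}. -/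

import Mathlib

/-!
Let `f_i = -log |P_i|` on `S(P_i, y_i)` and `0` elsewhere, so that the integrand is
`(-1)^s ∏ f_i ≥ 0` on the intersection. Hölder's inequality with `s` equal exponents gives
`∫ ∏ f_i ≤ ∏ (∫ f_i^s)^{1/s}`. With `δ_i = 1/(k_i - 1)`, the hypothesis bounds the tail
`μ_1{f_i > t}` by `C_i min(y_i, e^{-t})^{δ_i}`, which is `C_i` times the tail of `-log z` under the
measure `δ_i z^{δ_i - 1} dz` on `(0, y_i)`. Comparing the two layer-cake formulas,
`∫ f_i^s ≤ C_i ∫_0^{y_i} (-log z)^s δ_i z^{δ_i - 1} dz = C_i I_{s,k_i}(y_i)`.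
-/

open MeasureTheory Polynomial Real

/-- `S(P,y) = {z ∈ 𝕋 : |P(z)| < y}`. -/
def S1 (P : Polynomial ℂ) (y : ℝ) : Set ℂ :=
  {z : ℂ | ‖z‖ = 1 ∧ ‖P.eval z‖ < y}

/-- Arc-length measure on the unit circle, via the parametrization `θ ∈ (0,2π] ↦ e^{iθ}`. -/
noncomputable def mu1 (A : Set ℂ) : ENNReal :=
  volume {θ : ℝ | θ ∈ Set.Ioc (0:ℝ) (2*π) ∧ Complex.exp ((θ:ℂ) * Complex.I) ∈ A}

/-- `∫_A f(x) dx/x := ∫_0^{2π} 1_A(e^{iθ}) f(e^{iθ}) dθ`. -/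
noncomputable def circleIntOn (A : Set ℂ) (f : ℂ → ℝ) : ℝ :=
  ∫ θ in (0:ℝ)..(2*π), Set.indicator A f (Complex.exp ((θ:ℂ) * Complex.I))

/-- `J_{ℓ,δ}(y) := (−1)^ℓ δ ∫_0^y (log z)^ℓ z^{δ−1} dz`. -/
noncomputable def J (ℓ : ℕ) (δ y : ℝ) : ℝ :=
  (-1:ℝ)^ℓ * δ * ∫ z in (0:ℝ)..y, (Real.log z)^ℓ * z ^ (δ - 1)

/-- `I_{ℓ,k}(y) := J_{ℓ,1/(k−1)}(y)`. -/
noncomputable def Ifun (ℓ k : ℕ) (y : ℝ) : ℝ := J ℓ (1/((k:ℝ)-1)) y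

open Set Filter
open scoped ENNReal

theorem lintegral_rpow_le_of_meas_lt_le {α β : Type*} [MeasurableSpace α] [MeasurableSpace β]
    {μ : Measure α} {ν : Measure β} {f : α → ℝ} {g : β → ℝ}
    (hf0 : 0 ≤ᵐ[μ] f) (hf : AEMeasurable f μ) (hg0 : 0 ≤ᵐ[ν] g) (hg : AEMeasurable g ν)
    {p : ℝ} (hp : 0 < p) {c : ℝ≥0∞}
    (hfg : ∀ t > 0, μ {a | t < f a} ≤ c * ν {b | t < g b}) :
    ∫⁻ a, ENNReal.ofReal (f a ^ p) ∂μ ≤ c * ∫⁻ b, ENNReal.ofReal (g b ^ p) ∂ν := by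
  have hmeas : Measurable fun t : ℝ => ν {b | t < g b} * ENNReal.ofReal (t ^ (p - 1)) :=
    (Antitone.measurable fun s t hst => measure_mono fun b (hb : t < g b) => hst.trans_lt hb).mul
      (by fun_prop)
  rw [lintegral_rpow_eq_lintegral_meas_lt_mul μ hf0 hf hp,
    lintegral_rpow_eq_lintegral_meas_lt_mul ν hg0 hg hp, mul_left_comm,
    ← lintegral_const_mul c hmeas]
  gcongr _ * ?_
  refine setLIntegral_mono' measurableSet_Ioi fun t ht => ?_
  rw [← mul_assoc]
  gcongr
  exact hfg t ht

noncomputable def powerLawMeasure (δ y : ℝ) : Measure ℝ :=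
  (volume.restrict (Ioo 0 y)).withDensity fun z => ENNReal.ofReal (δ * z ^ (δ - 1))

theorem lintegral_Ioo_mul_rpow_sub_one {δ m : ℝ} (hδ : 0 < δ) (hm : 0 ≤ m) :
    ∫⁻ z in Ioo 0 m, ENNReal.ofReal (δ * z ^ (δ - 1)) = ENNReal.ofReal (m ^ δ) := by
  have hint : IntegrableOn (fun z : ℝ => δ * z ^ (δ - 1)) (Ioo 0 m) := by
    rw [← intervalIntegrable_iff_integrableOn_Ioo_of_le hm]
    exact (intervalIntegral.intervalIntegrable_rpow' (by linarith)).const_mul δ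
  have hnonneg : 0 ≤ᵐ[volume.restrict (Ioo 0 m)] fun z => δ * z ^ (δ - 1) :=
    ae_restrict_of_forall_mem measurableSet_Ioo fun z hz => by have := hz.1; positivity
  rw [← ofReal_integral_eq_lintegral_ofReal hint hnonneg, integral_const_mul,
    ← integral_Ioc_eq_integral_Ioo, ← intervalIntegral.integral_of_le hm,
    integral_rpow (Or.inl (by linarith)), sub_add_cancel, zero_rpow hδ.ne', sub_zero,
    mul_div_cancel₀ _ hδ.ne']

theorem powerLawMeasure_setOf_lt_neg_log {δ y : ℝ} (hδ : 0 < δ) (hy : 0 ≤ y) (t : ℝ) :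
    powerLawMeasure δ y {z | t < -log z} = ENNReal.ofReal (min y (exp (-t)) ^ δ) := by
  have hset : {z | t < -log z} ∩ Ioo 0 y = Ioo 0 (min y (exp (-t))) := by
    ext z
    simp only [mem_inter_iff, mem_ofPred_eq, mem_Ioo, lt_min_iff]
    constructor
    · rintro ⟨h, hz0, hzy⟩
      exact ⟨hz0, hzy, (log_lt_iff_lt_exp hz0).1 (by linarith)⟩
    · rintro ⟨hz0, hzy, hzt⟩
      exact ⟨by linarith [(log_lt_iff_lt_exp hz0).2 hzt], hz0, hzy⟩
  rw [powerLawMeasure, withDensity_apply _ (measurableSet_lt measurable_const (by fun_prop)),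
    Measure.restrict_restrict (measurableSet_lt measurable_const (by fun_prop)), hset,
    lintegral_Ioo_mul_rpow_sub_one hδ (le_min hy (exp_pos _).le)]

theorem neg_log_le_rpow_neg_div {z ε : ℝ} (hz0 : 0 < z) (hz1 : z ≤ 1) (hε : 0 < ε) :
    -log z ≤ z ^ (-ε) / ε := by
  have h := (abs_lt.1 (abs_log_mul_self_rpow_lt z ε hz0 hz1 hε)).1
  have hzε : 0 < z ^ ε := rpow_pos_of_pos hz0 ε
  calc -log z = -log z * z ^ ε * (z ^ ε)⁻¹ := by field_simp
    _ ≤ 1 / ε * (z ^ ε)⁻¹ := by gcongr; linarith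
    _ = z ^ (-ε) / ε := by rw [rpow_neg hz0.le]; ring

theorem integrableOn_neg_log_pow_mul_rpow (n : ℕ) {δ : ℝ} (hδ : 0 < δ) :
    IntegrableOn (fun z => (-log z) ^ n * z ^ (δ - 1)) (Ioo 0 1) := by
  set ε := δ / (2 * (n + 1))
  have hε : 0 < ε := by positivity
  have hnε : n * ε < δ := by
    rw [mul_div_assoc', div_lt_iff₀ (by positivity)]
    nlinarith
  have hdom : IntegrableOn (fun z => ε⁻¹ ^ n * z ^ (δ - 1 - n * ε)) (Ioo 0 1) :=
    ((intervalIntegral.integrableOn_Ioo_rpow_iff one_pos).2 (by linarith)).const_mul _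
  refine hdom.mono' (by fun_prop) (ae_restrict_of_forall_mem measurableSet_Ioo ?_)
  rintro z ⟨hz0, hz1⟩
  have hlog : 0 ≤ -log z := neg_nonneg.2 (log_nonpos hz0.le hz1.le)
  rw [Real.norm_of_nonneg (by positivity)]
  calc (-log z) ^ n * z ^ (δ - 1) ≤ (z ^ (-ε) / ε) ^ n * z ^ (δ - 1) := by
        gcongr; exact neg_log_le_rpow_neg_div hz0 hz1.le hε
    _ = ε⁻¹ ^ n * z ^ (δ - 1 - n * ε) := by
        rw [div_pow, ← rpow_natCast, ← rpow_mul hz0.le, sub_eq_add_neg (δ - 1), rpow_add hz0]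
        ring_nf

theorem neg_log_nonneg_of_mem_Ioo {y z : ℝ} (hy1 : y ≤ 1) (hz : z ∈ Ioo 0 y) : 0 ≤ -log z :=
  neg_nonneg.2 (log_nonpos hz.1.le (hz.2.le.trans hy1))

theorem J_eq_setIntegral (n : ℕ) (δ : ℝ) {y : ℝ} (hy : 0 ≤ y) :
    J n δ y = ∫ z in Ioo 0 y, (-log z) ^ n * (δ * z ^ (δ - 1)) := by
  rw [J, intervalIntegral.integral_of_le hy, integral_Ioc_eq_integral_Ioo, ← integral_const_mul]
  refine integral_congr_ae (Eventually.of_forall fun z => ?_)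
  rw [neg_pow]
  ring

theorem J_nonneg (n : ℕ) {δ y : ℝ} (hδ : 0 ≤ δ) (hy : 0 ≤ y) (hy1 : y ≤ 1) : 0 ≤ J n δ y := by
  rw [J_eq_setIntegral n δ hy]
  refine setIntegral_nonneg measurableSet_Ioo fun z hz => ?_
  have := neg_log_nonneg_of_mem_Ioo hy1 hz
  have := hz.1
  positivity

theorem lintegral_neg_log_pow_powerLawMeasure (n : ℕ) {δ y : ℝ} (hδ : 0 < δ) (hy : 0 ≤ y)
    (hy1 : y ≤ 1) :
    ∫⁻ z, ENNReal.ofReal ((-log z) ^ n) ∂powerLawMeasure δ y = ENNReal.ofReal (J n δ y) := by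
  have hint : IntegrableOn (fun z => (-log z) ^ n * (δ * z ^ (δ - 1))) (Ioo 0 y) := by
    have h := ((integrableOn_neg_log_pow_mul_rpow n hδ).mono_set
      (Ioo_subset_Ioo_right hy1)).const_mul δ
    exact IntegrableOn.congr_fun h (fun z _ => by ring) measurableSet_Ioo
  have hnonneg : 0 ≤ᵐ[volume.restrict (Ioo 0 y)] fun z => (-log z) ^ n * (δ * z ^ (δ - 1)) :=
    ae_restrict_of_forall_mem measurableSet_Ioo fun z hz => by
      have := neg_log_nonneg_of_mem_Ioo hy1 hz
      have := hz.1
      positivity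
  rw [powerLawMeasure, lintegral_withDensity_eq_lintegral_mul _ (by fun_prop) (by fun_prop),
    J_eq_setIntegral n δ hy, ofReal_integral_eq_lintegral_ofReal hint hnonneg]
  refine setLIntegral_congr_fun measurableSet_Ioo fun z hz => ?_
  have := neg_log_nonneg_of_mem_Ioo hy1 hz
  rw [Pi.mul_apply, mul_comm, ← ENNReal.ofReal_mul (by positivity)]

section TruncNegLog

variable {α : Type*}

noncomputable def truncNegLog (u : α → ℝ) (y : ℝ) : α → ℝ :=
  {a | u a < y}.indicator fun a => -log (u a)

theorem truncNegLog_nonneg {u : α → ℝ} (hu0 : ∀ a, 0 ≤ u a) {y : ℝ} (hy1 : y ≤ 1) (a : α) :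
    0 ≤ truncNegLog u y a :=
  indicator_nonneg (fun a (ha : u a < y) => neg_nonneg.2 (log_nonpos (hu0 a) (ha.le.trans hy1))) a

theorem truncNegLog_of_lt {u : α → ℝ} {y : ℝ} {a : α} (h : u a < y) :
    truncNegLog u y a = -log (u a) :=
  indicator_of_mem (s := {a | u a < y}) h _

theorem truncNegLog_of_le {u : α → ℝ} {y : ℝ} {a : α} (h : y ≤ u a) : truncNegLog u y a = 0 :=
  indicator_of_notMem (s := {a | u a < y}) h.not_gt _

variable [MeasurableSpace α]

theorem Measurable.truncNegLog {u : α → ℝ} (hu : Measurable u) (y : ℝ) :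
    Measurable (truncNegLog u y) :=
  hu.log.neg.indicator (measurableSet_lt hu measurable_const)

theorem lintegral_truncNegLog_pow_le {μ : Measure α} {u : α → ℝ} (hu : Measurable u)
    (hu0 : ∀ a, 0 ≤ u a) {C δ y : ℝ} (hδ : 0 < δ) (hy : 0 < y) (hy1 : y ≤ 1)
    (hdist : ∀ t > 0, μ {a | u a < t} ≤ ENNReal.ofReal (C * t ^ δ)) {n : ℕ} (hn : n ≠ 0) :
    ∫⁻ a, ENNReal.ofReal (truncNegLog u y a) ^ n ∂μ ≤ ENNReal.ofReal (C * J n δ y) := by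
  have hlevel : ∀ t > 0, μ {a | t < truncNegLog u y a} ≤
      ENNReal.ofReal C * powerLawMeasure δ y {z | t < -log z} := by
    intro t ht
    rw [powerLawMeasure_setOf_lt_neg_log hδ hy.le, ← ENNReal.ofReal_mul' (by positivity)]
    refine (measure_mono fun a (ha : t < truncNegLog u y a) => ?_).trans
      (hdist _ (lt_min hy (exp_pos _)))
    rcases lt_or_ge (u a) y with hay | hya
    · rw [truncNegLog_of_lt hay] at ha
      refine lt_min hay ?_
      rcases (hu0 a).eq_or_lt with h0 | hpos
      · rw [← h0]; exact exp_pos _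
      · exact (log_lt_iff_lt_exp hpos).1 (by linarith)
    · rw [truncNegLog_of_le hya] at ha
      linarith
  have hlog : 0 ≤ᵐ[powerLawMeasure δ y] fun z => -log z :=
    (withDensity_absolutelyContinuous _ _).ae_le <|
      ae_restrict_of_forall_mem measurableSet_Ioo fun _ => neg_log_nonneg_of_mem_Ioo hy1
  have h := lintegral_rpow_le_of_meas_lt_le (ae_of_all _ (truncNegLog_nonneg hu0 hy1))
    (hu.truncNegLog y).aemeasurable hlog measurable_log.neg.aemeasurable
    (Nat.cast_pos.2 (Nat.pos_of_ne_zero hn)) hlevel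
  simp only [rpow_natCast] at h
  rw [lintegral_neg_log_pow_powerLawMeasure n hδ hy.le hy1,
    ← ENNReal.ofReal_mul' (J_nonneg n hδ.le hy.le hy1)] at h
  refine le_of_eq_of_le (lintegral_congr fun a => ?_) h
  rw [ENNReal.ofReal_pow (truncNegLog_nonneg hu0 hy1 a)]

end TruncNegLog

theorem integral_prod_le_of_lintegral_pow_le {α : Type*} [MeasurableSpace α] {μ : Measure α}
    {n : ℕ} (hn : n ≠ 0) {f : Fin n → α → ℝ} (hf : ∀ i, AEMeasurable (f i) μ)
    (hf0 : ∀ i a, 0 ≤ f i a) {B : Fin n → ℝ} (hB0 : ∀ i, 0 ≤ B i)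
    (hB : ∀ i, ∫⁻ a, ENNReal.ofReal (f i a) ^ n ∂μ ≤ ENNReal.ofReal (B i)) :
    ∫ a, ∏ i, f i a ∂μ ≤ (∏ i, B i) ^ (1 / n : ℝ) := by
  have hn' : (n : ℝ) ≠ 0 := Nat.cast_ne_zero.2 hn
  have hsum : ∑ _i : Fin n, (1 / n : ℝ) = 1 := by
    rw [Finset.sum_const, Finset.card_univ, Fintype.card_fin, nsmul_eq_mul, mul_one_div_cancel hn']
  have hroot : ∀ x : ℝ≥0∞, (x ^ n) ^ (1 / n : ℝ) = x := fun x => by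
    rw [← ENNReal.rpow_natCast, ← ENNReal.rpow_mul, mul_one_div_cancel hn', ENNReal.rpow_one]
  have holder := ENNReal.lintegral_prod_norm_pow_le (μ := μ) Finset.univ
    (f := fun i a => ENNReal.ofReal (f i a) ^ n)
    (fun i _ => (hf i).ennreal_ofReal.pow_const n) hsum (fun _ _ => by positivity)
  simp only [hroot] at holder
  rw [integral_eq_lintegral_of_nonneg_ae
      (ae_of_all _ fun a => Finset.prod_nonneg fun i _ => hf0 i a)
      (Finset.aemeasurable_fun_prod _ fun i _ => hf i).aestronglyMeasurable,
    ← Real.finsetProd_rpow _ _ (fun i _ => hB0 i),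
    ← ENNReal.toReal_ofReal (Finset.prod_nonneg fun i _ => rpow_nonneg (hB0 i) _)]
  refine ENNReal.toReal_mono ENNReal.ofReal_ne_top ?_
  calc ∫⁻ a, ENNReal.ofReal (∏ i, f i a) ∂μ = ∫⁻ a, ∏ i, ENNReal.ofReal (f i a) ∂μ := by
        simp only [ENNReal.ofReal_prod_of_nonneg fun i _ => hf0 i _]
    _ ≤ ∏ i, (∫⁻ a, ENNReal.ofReal (f i a) ^ n ∂μ) ^ (1 / n : ℝ) := holder
    _ ≤ ∏ i, ENNReal.ofReal (B i) ^ (1 / n : ℝ) := by gcongr with i; exact hB i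
    _ = ENNReal.ofReal (∏ i, B i ^ (1 / n : ℝ)) := by
        rw [ENNReal.ofReal_prod_of_nonneg fun i _ => rpow_nonneg (hB0 i) _]
        simp only [ENNReal.ofReal_rpow_of_nonneg (hB0 _) (by positivity : (0 : ℝ) ≤ 1 / n)]

noncomputable def normEvalCircle (P : ℂ[X]) (θ : ℝ) : ℝ :=
  ‖P.eval (Complex.exp (θ * Complex.I))‖

theorem continuous_normEvalCircle (P : ℂ[X]) : Continuous (normEvalCircle P) := by
  unfold normEvalCircle
  fun_prop

theorem mu1_S1 (P : ℂ[X]) (t : ℝ) :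
    mu1 (S1 P t) = volume.restrict (Ioc 0 (2 * π)) {θ | normEvalCircle P θ < t} := by
  rw [mu1, Measure.restrict_apply
    (measurableSet_lt (continuous_normEvalCircle P).measurable measurable_const)]
  congr 1
  ext θ
  simp [S1, normEvalCircle, Complex.norm_exp_ofReal_mul_I, and_comm]

theorem neg_one_pow_mul_circleIntOn_iInter_S1 {s : ℕ} (P : Fin s → ℂ[X]) (y : Fin s → ℝ) :
    (-1 : ℝ) ^ s * circleIntOn (⋂ i, S1 (P i) (y i)) (fun z => ∏ i, log ‖(P i).eval z‖) =
      ∫ θ in Ioc 0 (2 * π), ∏ i, truncNegLog (normEvalCircle (P i)) (y i) θ := by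
  rw [circleIntOn, intervalIntegral.integral_of_le (by positivity), ← integral_const_mul]
  refine integral_congr_ae (Eventually.of_forall fun θ => ?_)
  dsimp only
  by_cases h : ∀ i, normEvalCircle (P i) θ < y i
  · have hmem : Complex.exp (θ * Complex.I) ∈ ⋂ i, S1 (P i) (y i) :=
      mem_iInter.2 fun i => ⟨Complex.norm_exp_ofReal_mul_I θ, h i⟩
    simp only [indicator_of_mem hmem, truncNegLog_of_lt (h _), normEvalCircle, Finset.prod_neg,
      Finset.card_univ, Fintype.card_fin]
  · push Not at h
    obtain ⟨j, hj⟩ := h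
    have hmem : Complex.exp (θ * Complex.I) ∉ ⋂ i, S1 (P i) (y i) := fun hmem =>
      hj.not_gt (mem_iInter.1 hmem j).2
    rw [indicator_of_notMem hmem, mul_zero]
    exact (Finset.prod_eq_zero (Finset.mem_univ j)
      (truncNegLog_of_le (u := normEvalCircle (P j)) hj)).symm

theorem product_log_integral_intersection_bound_general
    (s : ℕ) (hs : 1 ≤ s)
    (P : Fin s → Polynomial ℂ) (k : Fin s → ℕ) (hk : ∀ i, 2 ≤ k i)
    (C : Fin s → ℝ) (hC : ∀ i, 0 < C i)
    (hμ : ∀ i, ∀ t : ℝ, 0 < t →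
      mu1 (S1 (P i) t) ≤ ENNReal.ofReal (C i * t ^ ((1:ℝ)/((k i : ℝ)-1))))
    (y : Fin s → ℝ) (hy : ∀ i, 0 < y i) (hy1 : ∀ i, y i ≤ 1) :
    0 ≤ (-1:ℝ)^s * circleIntOn (⋂ i, S1 (P i) (y i))
          (fun z => ∏ i, Real.log ‖(P i).eval z‖) ∧
      (-1:ℝ)^s * circleIntOn (⋂ i, S1 (P i) (y i))
          (fun z => ∏ i, Real.log ‖(P i).eval z‖)
        ≤ (∏ i, C i * Ifun s (k i) (y i)) ^ ((1:ℝ)/(s:ℝ)) := by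
  have hu : ∀ i, Measurable (normEvalCircle (P i)) :=
    fun i => (continuous_normEvalCircle (P i)).measurable
  have hf0 : ∀ i θ, 0 ≤ truncNegLog (normEvalCircle (P i)) (y i) θ :=
    fun i => truncNegLog_nonneg (fun _ => norm_nonneg _) (hy1 i)
  have hδ : ∀ i, 0 < 1 / ((k i : ℝ) - 1) := fun i => by
    have : (2 : ℝ) ≤ k i := by exact_mod_cast hk i
    exact one_div_pos.2 (by linarith)
  rw [neg_one_pow_mul_circleIntOn_iInter_S1]
  refine ⟨integral_nonneg fun θ => Finset.prod_nonneg fun i _ => hf0 i θ,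
    integral_prod_le_of_lintegral_pow_le (by omega) (fun i => (hu i).truncNegLog _ |>.aemeasurable)
      hf0 (fun i => mul_nonneg (hC i).le (J_nonneg s (hδ i).le (hy i).le (hy1 i))) fun i => ?_⟩
  refine lintegral_truncNegLog_pow_le (hu i) (fun _ => norm_nonneg _) (hδ i) (hy i) (hy1 i)
    (fun t ht => ?_) (by omega)
  rw [← mu1_S1]
  exact hμ i t ht

/-- Bound for the product of logs integrated over `S(P_1,y_1) ∩ ⋯ ∩ S(P_s,y_s)`. -/
theorem product_log_integral_intersection_bound
    (s : ℕ) (hs : 1 ≤ s)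
    (P : Fin s → Polynomial ℂ) (k : Fin s → ℕ) (hk : ∀ i, 2 ≤ k i)
    (hsupp : ∀ i, (P i).support.card = k i)
    (C : Fin s → ℝ) (hC : ∀ i, 0 < C i)
    (hμ : ∀ i, ∀ t : ℝ, 0 < t →
      mu1 (S1 (P i) t) ≤ ENNReal.ofReal (C i * t ^ ((1:ℝ)/((k i : ℝ)-1))))
    (y : Fin s → ℝ) (hy : ∀ i, 0 < y i) (hy1 : ∀ i, y i ≤ 1) :
    0 ≤ (-1:ℝ)^s * circleIntOn (⋂ i, S1 (P i) (y i))
          (fun z => ∏ i, Real.log ‖(P i).eval z‖) ∧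
      (-1:ℝ)^s * circleIntOn (⋂ i, S1 (P i) (y i))
          (fun z => ∏ i, Real.log ‖(P i).eval z‖)
        ≤ (∏ i, C i * Ifun s (k i) (y i)) ^ ((1:ℝ)/(s:ℝ)) :=
  product_log_integral_intersection_bound_general s hs P k hk C hC hμ y hy hy1
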